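/- Let n ∈ ℝ² be a unit vector, let v ∈ ℝ² be nonzero with v · n = 0, and let g, w ∈ ℝ² satisfy (D(v) g) · n = 0 and (D(v) w) · n = 0. Then [(Ê(v) ⊗ g) w] · n = 0, i.e., Σ_{k=1}^{2} n_k Σ_{i=1}^{2} (Σ_{j=1}^{2} ∂_{v_k} D_{ij}(v) g_j) w_i = 0. -/

import Mathlib

/-! Write `D(v) = a I + b v vᵀ / |v|` with `a = φ d_m + d_t |v| > 0` and `b = d_l - d_t`.
Since `v ⊥ n`, the flux `(D(v) g) · n` reduces to `a (g · n)`, so `g ⊥ n` and likewise `w ⊥ n`.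
The contraction `Σ_k n_k ∂_{v_k} D(v)` is the directional derivative of `D` at `v` along `n`,
and every term of its `(w, g)` entry carries one of the factors `v · n`, `g · n`, `w · n`. -/

open scoped BigOperators

/-- Euclidean norm of a vector in ℝ². -/
noncomputable def norm2 (v : Fin 2 → ℝ) : ℝ := Real.sqrt (∑ i, v i ^ 2)

/-- The 2D Bear–Scheidegger diffusion–dispersion tensor. -/
noncomputable def bsD (φ dm dt dl : ℝ) (v : Fin 2 → ℝ) (i j : Fin 2) : ℝ :=
  (φ * dm + dt * norm2 v) * (if i = j then (1 : ℝ) else 0) + (dl - dt) * v i * v j / norm2 v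

/-- The partial derivative `∂_{v_k} D_{ij}(v)`. -/
noncomputable def pD (φ dm dt dl : ℝ) (v : Fin 2 → ℝ) (i j k : Fin 2) : ℝ :=
  fderiv ℝ (fun u => bsD φ dm dt dl u i j) v (Pi.single k 1)

open ContinuousLinearMap

theorem LinearMap.sum_mul_apply_single {R ι : Type*} [CommSemiring R] [Fintype ι] [DecidableEq ι]
    (L : (ι → R) →ₗ[R] R) (h : ι → R) : ∑ k, h k * L (Pi.single k 1) = L h := by
  conv_rhs => rw [← Finset.univ_sum_single h, map_sum]
  refine Finset.sum_congr rfl fun k _ => ?_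
  rw [← smul_eq_mul, ← map_smul, ← Pi.single_smul, smul_eq_mul, mul_one]

theorem sum_sq_pos {ι : Type*} [Fintype ι] {v : ι → ℝ} (hv : v ≠ 0) : 0 < ∑ i, v i ^ 2 := by
  obtain ⟨i, hi⟩ := Function.ne_iff.mp hv
  exact Finset.sum_pos' (fun j _ => sq_nonneg (v j))
    ⟨i, Finset.mem_univ i, pow_two_pos_of_ne_zero hi⟩

theorem norm2_pos {v : Fin 2 → ℝ} (hv : v ≠ 0) : 0 < norm2 v :=
  Real.sqrt_pos.mpr (sum_sq_pos hv)

theorem hasFDerivAt_norm2 {v : Fin 2 → ℝ} (hv : v ≠ 0) :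
    HasFDerivAt norm2 ((norm2 v)⁻¹ • ∑ i, v i • proj (R := ℝ) (φ := fun _ : Fin 2 => ℝ) i) v := by
  have hsq : HasFDerivAt (fun u : Fin 2 → ℝ => ∑ i, u i ^ 2)
      (∑ i, (2 * v i) • proj (R := ℝ) (φ := fun _ : Fin 2 => ℝ) i) v :=
    HasFDerivAt.fun_sum fun i _ => by simpa using (hasFDerivAt_apply (𝕜 := ℝ) i v).pow 2
  refine (hsq.sqrt (sum_sq_pos hv).ne').congr_fderiv ?_
  rw [norm2, Finset.smul_sum, Finset.smul_sum]
  refine Finset.sum_congr rfl fun i _ => ?_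
  rw [smul_smul, smul_smul]
  congr 1
  field_simp

theorem fderiv_bsD_apply (φ dm dt dl : ℝ) {v : Fin 2 → ℝ} (hv : v ≠ 0) (i j : Fin 2)
    (h : Fin 2 → ℝ) :
    fderiv ℝ (fun u => bsD φ dm dt dl u i j) v h =
      dt * (v ⬝ᵥ h) / norm2 v * (if i = j then 1 else 0)
        + (dl - dt) * ((h i * v j + v i * h j) / norm2 v - v i * v j * (v ⬝ᵥ h) / norm2 v ^ 3) := by
  have hnorm := hasFDerivAt_norm2 hv
  have hpos := norm2_pos hv
  have hD : HasFDerivAt (fun u => bsD φ dm dt dl u i j) _ v :=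
    (((hnorm.const_mul dt).const_add (φ * dm)).mul_const _).add
      ((((hasFDerivAt_apply (𝕜 := ℝ) i v).const_mul (dl - dt)).mul
        (hasFDerivAt_apply (𝕜 := ℝ) j v)).mul
        ((hasDerivAt_inv hpos.ne').comp_hasFDerivAt v hnorm))
  rw [hD.fderiv]
  generalize (if i = j then (1 : ℝ) else 0) = δ
  simp only [Fin.sum_univ_two, Fin.isValue, smul_add, Pi.mul_apply, neg_smul, smul_neg, add_apply,
    smul_apply, proj_apply, smul_eq_mul, neg_apply, dotProduct]
  field_simp
  ring

theorem sum_mul_pD (φ dm dt dl : ℝ) (v h : Fin 2 → ℝ) (i j : Fin 2) :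
    ∑ k, h k * pD φ dm dt dl v i j k = fderiv ℝ (fun u => bsD φ dm dt dl u i j) v h :=
  LinearMap.sum_mul_apply_single (fderiv ℝ (fun u => bsD φ dm dt dl u i j) v).toLinearMap h

theorem sum_bsD_mul_mul (φ dm dt dl : ℝ) (v g n : Fin 2 → ℝ) :
    ∑ i, (∑ j, bsD φ dm dt dl v i j * g j) * n i =
      (φ * dm + dt * norm2 v) * (g ⬝ᵥ n) + (dl - dt) * (v ⬝ᵥ g) * (v ⬝ᵥ n) / norm2 v := by
  simp only [bsD, mul_ite, mul_one, mul_zero, Fin.sum_univ_two, Fin.isValue, ↓reduceIte,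
    zero_ne_one, zero_add, one_ne_zero, dotProduct]
  ring

theorem dotProduct_eq_zero_of_bsD_flux_eq_zero {φ dm dt dl : ℝ} (hφdm : 0 < φ * dm)
    (hdt : 0 ≤ dt) {v g n : Fin 2 → ℝ} (hvn : v ⬝ᵥ n = 0)
    (hg : ∑ i, (∑ j, bsD φ dm dt dl v i j * g j) * n i = 0) : g ⬝ᵥ n = 0 := by
  rw [sum_bsD_mul_mul, hvn, mul_zero, zero_div, add_zero] at hg
  have ha : 0 < φ * dm + dt * norm2 v :=
    add_pos_of_pos_of_nonneg hφdm (mul_nonneg hdt (Real.sqrt_nonneg _))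
  exact (mul_eq_zero.mp hg).resolve_left ha.ne'

theorem sum_pD_contraction_eq (φ dm dt dl : ℝ) {v : Fin 2 → ℝ} (hv : v ≠ 0) (n g w : Fin 2 → ℝ) :
    ∑ k, n k * ∑ i, (∑ j, pD φ dm dt dl v i j k * g j) * w i =
      dt * (v ⬝ᵥ n) / norm2 v * (g ⬝ᵥ w)
        + (dl - dt) * (((w ⬝ᵥ n) * (v ⬝ᵥ g) + (v ⬝ᵥ w) * (g ⬝ᵥ n)) / norm2 v
          - (v ⬝ᵥ g) * (v ⬝ᵥ w) * (v ⬝ᵥ n) / norm2 v ^ 3) := by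
  have hpos := norm2_pos hv
  calc ∑ k, n k * ∑ i, (∑ j, pD φ dm dt dl v i j k * g j) * w i
      = ∑ i, ∑ j, (∑ k, n k * pD φ dm dt dl v i j k) * g j * w i := by
        simp only [Fin.sum_univ_two]; ring
    _ = _ := by
        simp only [sum_mul_pD, fderiv_bsD_apply _ _ _ _ hv]
        simp only [dotProduct, Fin.sum_univ_two, Fin.isValue, mul_ite, mul_one, mul_zero,
          ↓reduceIte, zero_ne_one, zero_add, one_ne_zero]
        field_simp
        ring

theorem stmt8_general (φ dm dt dl : ℝ) (hφ : 0 < φ) (hdm : 0 < dm) (hdt : 0 < dt)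
    (n v g w : Fin 2 → ℝ) (hv : v ≠ 0)
    (hvn : ∑ i, v i * n i = 0)
    (hg : ∑ i, (∑ j, bsD φ dm dt dl v i j * g j) * n i = 0)
    (hw : ∑ i, (∑ j, bsD φ dm dt dl v i j * w j) * n i = 0) :
    ∑ k, n k * ∑ i, (∑ j, pD φ dm dt dl v i j k * g j) * w i = 0 := by
  have hgn := dotProduct_eq_zero_of_bsD_flux_eq_zero (mul_pos hφ hdm) hdt.le hvn hg
  have hwn := dotProduct_eq_zero_of_bsD_flux_eq_zero (mul_pos hφ hdm) hdt.le hvn hw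
  rw [sum_pD_contraction_eq φ dm dt dl hv, show v ⬝ᵥ n = 0 from hvn, hgn, hwn]
  simp

theorem stmt8 (φ dm dt dl : ℝ) (hφ : 0 < φ) (hdm : 0 < dm) (hdt : 0 < dt) (hdl : 0 < dl)
    (n v g w : Fin 2 → ℝ) (hn : ∑ i, n i ^ 2 = 1) (hv : v ≠ 0)
    (hvn : ∑ i, v i * n i = 0)
    (hg : ∑ i, (∑ j, bsD φ dm dt dl v i j * g j) * n i = 0)
    (hw : ∑ i, (∑ j, bsD φ dm dt dl v i j * w j) * n i = 0) :
    ∑ k, n k * ∑ i, (∑ j, pD φ dm dt dl v i j k * g j) * w i = 0 :=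
  stmt8_general φ dm dt dl hφ hdm hdt n v g w hv hvn hg hw
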